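/- arXiv:2603.00045 — 2 statements merged into one kernel-verified Lean document; each statement's English description precedes it below -/
import Mathlib

section
/- Let X_1,…,X_L be finite nonempty types and X = X_1 × ⋯ × X_L. Let p_ω be a pmf on X of mixture-of-products form p_ω(x) = Σ_{c=1}^K ω_c · ∏_{i=1}^L p_{c,i}(x_i) (ω_c ≥ 0, Σ ω_c = 1, each p_{c,i} a pmf on X_i), and let θ_i : X_i → ℝ be strictly positive univariate potentials. Set z_{c,i} := Σ_{a∈X_i} p_{c,i}(a) · θ_i(a) and Z := Σ_{c=1}^K ω_c · ∏_{i=1}^L z_{c,i}, and suppose Z > 0. Then the tilted distribution p̂(x) := p_ω(x) · ∏_{i=1}^L θ_i(x_i) / Z is a pmf on X, and it is again of mixture-of-products form: p̂(x) = Σ_{c=1}^K η_c · ∏_{i=1}^L q_{c,i}(x_i), where η_c := ω_c · ∏_{i=1}^L z_{c,i} / Z and q_{c,i}(a) := p_{c,i}(a) · θ_i(a) / z_{c,i} whenever z_{c,i} > 0, and η_c = 0 whenever some z_{c,i} = 0. Moreover the η_c are nonnegative and sum to 1 and each q_{c,i} is a pmf on X_i. -/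
/-- Tilting a mixture-of-products pmf `p_ω` by strictly positive
univariate potentials `θᵢ` and renormalizing yields again a mixture of products, with
posterior mixture weights `η_c = ω_c · ∏ᵢ z_{c,i} / Z` and tilted leaves
`q_{c,i}(a) = p_{c,i}(a) · θᵢ(a) / z_{c,i}`. -/
theorem tilted_mixture_of_products_closure
    (L K : ℕ) (hL : 1 ≤ L) (hK : 1 ≤ K)
    (X : Fin L → Type*) [∀ i, Fintype (X i)] [∀ i, Nonempty (X i)]
    (ω : Fin K → ℝ) (hω0 : ∀ c, 0 ≤ ω c) (hω1 : ∑ c, ω c = 1)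
    (pc : Fin K → ∀ i, X i → ℝ)
    (hpc0 : ∀ c i a, 0 ≤ pc c i a) (hpc1 : ∀ c i, ∑ a, pc c i a = 1)
    (pω : (∀ i, X i) → ℝ)
    (hpω : ∀ x, pω x = ∑ c, ω c * ∏ i, pc c i (x i))
    (θ : ∀ i, X i → ℝ) (hθ : ∀ i a, 0 < θ i a)
    (z : Fin K → Fin L → ℝ) (hz : ∀ c i, z c i = ∑ a, pc c i a * θ i a)
    (Z : ℝ) (hZ : Z = ∑ c, ω c * ∏ i, z c i) (hZpos : 0 < Z)
    (phat : (∀ i, X i) → ℝ)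
    (hphat : ∀ x, phat x = pω x * (∏ i, θ i (x i)) / Z)
    (η : Fin K → ℝ) (hη : ∀ c, η c = ω c * (∏ i, z c i) / Z)
    (q : Fin K → ∀ i, X i → ℝ)
    (hq : ∀ c i a, 0 < z c i → q c i a = pc c i a * θ i a / z c i)
    (hη0' : ∀ c, (∃ i, z c i = 0) → η c = 0) :
    ((∀ x, 0 ≤ phat x) ∧ ∑ x : ∀ i, X i, phat x = 1) ∧
    (∀ x, phat x = ∑ c, η c * ∏ i, q c i (x i)) ∧
    ((∀ c, 0 ≤ η c) ∧ ∑ c, η c = 1) ∧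
    (∀ c i, (∀ a, 0 ≤ q c i a) ∧ ∑ a, q c i a = 1) := by
  -- each z c i is positive
  have hzpos : ∀ c i, 0 < z c i := by
    intro c i
    have hex : ∃ a, 0 < pc c i a := by
      by_contra h
      push_neg at h
      have : ∑ a, pc c i a = 0 :=
        Finset.sum_eq_zero fun a _ => le_antisymm (h a) (hpc0 c i a)
      rw [hpc1 c i] at this; norm_num at this
    obtain ⟨a, ha⟩ := hex
    rw [hz]
    exact Finset.sum_pos' (fun b _ => mul_nonneg (hpc0 c i b) (hθ i b).le)
      ⟨a, Finset.mem_univ a, mul_pos ha (hθ i a)⟩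
  have hqdef : ∀ c i a, q c i a = pc c i a * θ i a / z c i :=
    fun c i a => hq c i a (hzpos c i)
  -- q is a pmf
  have hq1 : ∀ c i, ∑ a, q c i a = 1 := by
    intro c i
    simp only [hqdef]
    rw [← Finset.sum_div, ← hz, div_self (hzpos c i).ne']
  have hq0 : ∀ c i a, 0 ≤ q c i a := fun c i a => by
    rw [hqdef]
    exact div_nonneg (mul_nonneg (hpc0 c i a) (hθ i a).le) (hzpos c i).le
  -- mixture representation
  have hmix : ∀ x, phat x = ∑ c, η c * ∏ i, q c i (x i) := by
    intro x
    have hterm : ∀ c, η c * ∏ i, q c i (x i)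
        = ω c * (∏ i, pc c i (x i) * θ i (x i)) / Z := by
      intro c
      have hqprod : ∏ i, q c i (x i)
          = (∏ i, pc c i (x i) * θ i (x i)) / ∏ i, z c i := by
        rw [← Finset.prod_div_distrib]
        exact Finset.prod_congr rfl fun i _ => hqdef c i (x i)
      have hzne : (∏ i, z c i) ≠ 0 :=
        (Finset.prod_pos fun i _ => hzpos c i).ne'
      rw [hη, hqprod]
      field_simp
    rw [hphat, hpω]
    simp only [hterm]
    rw [Finset.sum_mul, Finset.sum_div]
    refine Finset.sum_congr rfl fun c _ => ?_
    rw [Finset.prod_mul_distrib]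
    ring
  -- phat nonneg
  have hphat0 : ∀ x, 0 ≤ phat x := by
    intro x
    rw [hphat]
    refine div_nonneg (mul_nonneg ?_ (Finset.prod_nonneg fun i _ => (hθ i (x i)).le))
      hZpos.le
    rw [hpω]
    exact Finset.sum_nonneg fun c _ =>
      mul_nonneg (hω0 c) (Finset.prod_nonneg fun i _ => hpc0 c i (x i))
  -- phat sums to 1
  have hphatsum : ∑ x : ∀ i, X i, phat x = 1 := by
    classical
    calc ∑ x : ∀ i, X i, phat x
        = ∑ x : ∀ i, X i, ∑ c, ω c * (∏ i, pc c i (x i) * θ i (x i)) / Z := by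
          refine Finset.sum_congr rfl fun x _ => ?_
          rw [hphat, hpω, Finset.sum_mul, Finset.sum_div]
          refine Finset.sum_congr rfl fun c _ => ?_
          rw [Finset.prod_mul_distrib]; ring
      _ = ∑ c, ∑ x : ∀ i, X i, ω c * (∏ i, pc c i (x i) * θ i (x i)) / Z :=
          Finset.sum_comm
      _ = ∑ c, ω c * (∏ i, z c i) / Z := by
          refine Finset.sum_congr rfl fun c _ => ?_
          rw [← Finset.sum_div, ← Finset.mul_sum, ← Fintype.prod_sum fun i a => pc c i a * θ i a]
          congr 1
          exact congrArg (ω c * ·) (Finset.prod_congr rfl fun i _ => (hz c i).symm)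
      _ = 1 := by rw [← Finset.sum_div, ← hZ, div_self hZpos.ne']
  -- η sums to 1
  have hηsum : ∑ c, η c = 1 := by
    simp only [hη]
    rw [← Finset.sum_div, ← hZ, div_self hZpos.ne']
  have hη0 : ∀ c, 0 ≤ η c := fun c => by
    rw [hη]
    exact div_nonneg (mul_nonneg (hω0 c) (Finset.prod_nonneg fun i _ => (hzpos c i).le))
      hZpos.le
  exact ⟨⟨hphat0, hphatsum⟩, hmix, ⟨hη0, hηsum⟩, fun c i => ⟨hq0 c i, hq1 c i⟩⟩
end

section
/- Let I be a finite index set partitioned into disjoint subsets S and T, let X_i be finite nonempty types for i ∈ I, let f be a pmf on ∏_{i∈S} X_i and g a pmf on ∏_{i∈T} X_i, and let p(x) = f(x|_S) · g(x|_T) on ∏_{i∈I} X_i. Let O ⊆ I be a set of observed indices with observed values a_i ∈ X_i (i ∈ O), and let M = I \ O. Assume the evidence marginals are positive: Σ_{u : u_i = a_i ∀ i∈O∩S} f(u) > 0 and Σ_{v : v_i = a_i ∀ i∈O∩T} g(v) > 0. Then the conditional distribution of p given X_O = a factorizes across the two scopes: for every assignment b of the coordinates in M, p( X_M = b | X_O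 = a ) = f( X_{M∩S} = b|_{M∩S} | X_{O∩S} = a|_{O∩S} ) · g( X_{M∩T} = b|_{M∩T} | X_{O∩T} = a|_{O∩T} ), where each conditional is defined as the ratio of the corresponding joint and marginal sums. -/
/-- Glue an assignment `a` on the observed indices `O` with an assignment `b` on the
remaining indices `M` (where `O ∪ M` covers the whole index set) into a full joint
assignment. -/
def combineAssignment {I : Type*} [Fintype I] [DecidableEq I] {X : I → Type*}
    (O M : Finset I) (hcover : O ∪ M = Finset.univ)
    (a : ∀ i : O, X i) (b : ∀ i : M, X i) : ∀ i, X i :=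
  fun i =>
    if h : i ∈ O then a ⟨i, h⟩
    else b ⟨i, (Finset.mem_union.mp
      (by rw [hcover]; exact Finset.mem_univ i)).resolve_left h⟩

theorem key_sum
    {I : Type*} [Fintype I] [DecidableEq I]
    (X : I → Type*) [∀ i, Fintype (X i)] [∀ i, DecidableEq (X i)]
    (S T : Finset I) (hdisj : Disjoint S T) (hcover : S ∪ T = Finset.univ)
    (f : (∀ i : S, X i) → ℝ) (g : (∀ i : T, X i) → ℝ)
    (O M : Finset I) (hM : M = Oᶜ) (hOM : O ∪ M = Finset.univ)
    (a : ∀ i : O, X i) :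
    (∑ b' : ∀ i : M, X i,
        f (fun i : S => combineAssignment O M hOM a b' i) *
        g (fun i : T => combineAssignment O M hOM a b' i))
      = (∑ u : ∀ i : S, X i,
          if ∀ (i : S) (h : (i : I) ∈ O), u i = a ⟨i, h⟩ then f u else 0) *
        (∑ v : ∀ i : T, X i,
          if ∀ (i : T) (h : (i : I) ∈ O), v i = a ⟨i, h⟩ then g v else 0) := by
  classical
  have hmemT : ∀ i : I, i ∉ S → i ∈ T := fun i h =>
    (Finset.mem_union.mp (by rw [hcover]; exact Finset.mem_univ i)).resolve_left h
  have hnotO : ∀ i : I, i ∈ M → i ∉ O := by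
    intro i hi; rw [hM] at hi; exact Finset.mem_compl.mp hi
  -- inverse map
  set ψ : ((∀ i : S, X i) × (∀ i : T, X i)) → (∀ i : M, X i) :=
    fun uv i => if h : (i : I) ∈ S then uv.1 ⟨i, h⟩ else uv.2 ⟨i, hmemT i h⟩ with hψ
  symm
  rw [Finset.sum_mul_sum]
  simp_rw [ite_zero_mul_ite_zero]
  rw [← Fintype.sum_prod_type', ← Finset.sum_filter]
  refine Finset.sum_nbij' (i := ψ)
    (j := fun b' => (fun i : S => combineAssignment O M hOM a b' i,
                     fun i : T => combineAssignment O M hOM a b' i)) ?_ ?_ ?_ ?_ ?_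
  · intro uv h; exact Finset.mem_univ _
  · intro b' _
    simp only [Finset.mem_filter, Finset.mem_univ, true_and]
    constructor
    · intro i h; simp [combineAssignment, h]
    · intro i h; simp [combineAssignment, h]
  · intro uv h
    simp only [Finset.mem_filter, Finset.mem_univ, true_and] at h
    ext i
    · have hiS : (i : I) ∈ S := i.2
      simp only [combineAssignment]
      by_cases hiO : (i : I) ∈ O
      · simpa [hiO] using (h.1 i hiO).symm
      · simp [hiO, hψ, hiS]
    · have hiT : (i : I) ∈ T := i.2
      have hiS : (i : I) ∉ S := Finset.disjoint_right.mp hdisj hiT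
      simp only [combineAssignment]
      by_cases hiO : (i : I) ∈ O
      · simpa [hiO] using (h.2 i hiO).symm
      · simp [hiO, hψ, hiS]
  · intro b' _
    funext i
    have hiO : (i : I) ∉ O := hnotO i i.2
    by_cases hiS : (i : I) ∈ S <;> simp [hψ, hiS, combineAssignment, hiO]
  · intro uv h
    simp only [Finset.mem_filter, Finset.mem_univ, true_and] at h
    congr 1
    · congr 1; funext i
      simp only [combineAssignment]
      by_cases hiO : (i : I) ∈ O
      · simpa [hiO] using h.1 i hiO
      · simp [hiO, hψ, i.2]
    · congr 1; funext i
      have hiS : (i : I) ∉ S := Finset.disjoint_right.mp hdisj i.2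
      simp only [combineAssignment]
      by_cases hiO : (i : I) ∈ O
      · simpa [hiO] using h.2 i hiO
      · simp [hiO, hψ, hiS]

/-- For a product-node distribution `p(x) = f(x|_S) · g(x|_T)` over
disjoint scopes `S`, `T`, conditioning on evidence `a` on an observed set `O` (with
`M = I \ O` the unobserved indices) factorizes into the product of the conditionals
of `f` and `g` on their respective scopes, each defined as the ratio of joint and
marginal sums. -/
theorem product_node_conditional_factorization
    {I : Type*} [Fintype I] [DecidableEq I]
    (X : I → Type*) [∀ i, Fintype (X i)] [∀ i, Nonempty (X i)]
    [∀ i, DecidableEq (X i)]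
    (S T : Finset I) (hdisj : Disjoint S T) (hcover : S ∪ T = Finset.univ)
    (f : (∀ i : S, X i) → ℝ) (hf0 : ∀ u, 0 ≤ f u) (hf1 : ∑ u, f u = 1)
    (g : (∀ i : T, X i) → ℝ) (hg0 : ∀ v, 0 ≤ g v) (hg1 : ∑ v, g v = 1)
    (p : (∀ i, X i) → ℝ)
    (hp : ∀ x, p x = f (fun i => x i) * g (fun i => x i))
    (O M : Finset I) (hM : M = Oᶜ) (hOM : O ∪ M = Finset.univ)
    (a : ∀ i : O, X i)
    (hfpos : 0 < ∑ u : ∀ i : S, X i,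
      if ∀ (i : S) (h : (i : I) ∈ O), u i = a ⟨i, h⟩ then f u else 0)
    (hgpos : 0 < ∑ v : ∀ i : T, X i,
      if ∀ (i : T) (h : (i : I) ∈ O), v i = a ⟨i, h⟩ then g v else 0) :
    ∀ b : ∀ i : M, X i,
      p (combineAssignment O M hOM a b) /
          (∑ b' : ∀ i : M, X i, p (combineAssignment O M hOM a b')) =
        (f (fun i : S => combineAssignment O M hOM a b i) /
            (∑ u : ∀ i : S, X i,
              if ∀ (i : S) (h : (i : I) ∈ O), u i = a ⟨i, h⟩ then f u else 0)) *
        (g (fun i : T => combineAssignment O M hOM a b i) /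
            (∑ v : ∀ i : T, X i,
              if ∀ (i : T) (h : (i : I) ∈ O), v i = a ⟨i, h⟩ then g v else 0)) := by
  intro b
  simp_rw [hp]
  rw [key_sum X S T hdisj hcover f g O M hM hOM a, div_mul_div_comm]
end
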